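/- arXiv:2605.22346 — 2 statements merged into one kernel-verified Lean document; each statement's English description precedes it below -/
import Mathlib

section
/- Let G be a simple graph on Fin n in which every vertex has positive degree, with adjacency matrix A, symmetric normalised Laplacian L, and mean degree d̄ > 0; let α = max(√(d̄ / d_min) − 1, 1 − √(d̄ / d_max)). Then for every real n×n matrix R, writing E = A − R and F = L − (1/d̄) • R, one has the bound ‖F‖_F ≤ (1/d̄) * (‖E‖_F + α * (2 + α) * √(n * d̄)). -/
/-! With `xᵢ = √(d̄ / dᵢ)` one has `d̄ L = D_x A D_x`, so `d̄ L − A` is the entrywise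
product of `A` with `(xᵢ xⱼ − 1)ᵢⱼ`. Every `xᵢ` lies within `α` of `1`, hence
`|xᵢ xⱼ − 1| ≤ α (2 + α)`, and as `A` is a `0/1` matrix, `‖A‖_F² = Σ dᵢ = n d̄`.
The triangle inequality for `F = (L − A / d̄) + (A − R) / d̄` finishes the proof. -/

open Matrix Finset

/-- The Frobenius norm `‖M‖_F = √(Σᵢⱼ Mᵢⱼ²)` of a real matrix. -/
noncomputable def frobNorm {n : ℕ} (M : Matrix (Fin n) (Fin n) ℝ) : ℝ :=
  Real.sqrt (∑ i, ∑ j, (M i j) ^ 2)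

section FrobeniusNorm

attribute [local instance] Matrix.frobeniusNormedAddCommGroup Matrix.frobeniusNormedSpace

variable {n : ℕ}

lemma frobNorm_eq_norm (M : Matrix (Fin n) (Fin n) ℝ) : frobNorm M = ‖M‖ := by
  simp_rw [frobNorm, Matrix.frobenius_norm_def, Real.sqrt_eq_rpow, Real.rpow_two,
    Real.norm_eq_abs, sq_abs]

lemma frobNorm_add_le (M N : Matrix (Fin n) (Fin n) ℝ) :
    frobNorm (M + N) ≤ frobNorm M + frobNorm N := by
  simpa only [frobNorm_eq_norm] using norm_add_le M N

lemma frobNorm_smul (c : ℝ) (M : Matrix (Fin n) (Fin n) ℝ) :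
    frobNorm (c • M) = |c| * frobNorm M := by
  simp only [frobNorm_eq_norm, norm_smul, Real.norm_eq_abs]

end FrobeniusNorm

lemma frobNorm_hadamard_le {n : ℕ} (A B : Matrix (Fin n) (Fin n) ℝ) {c : ℝ} (hc : 0 ≤ c)
    (hB : ∀ i j, |B i j| ≤ c) : frobNorm (A ⊙ B) ≤ c * frobNorm A := by
  rw [frobNorm, frobNorm, ← Real.sqrt_sq hc, ← Real.sqrt_mul (sq_nonneg c), mul_sum]
  refine Real.sqrt_le_sqrt (sum_le_sum fun i _ => ?_)
  rw [mul_sum]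
  refine sum_le_sum fun j _ => ?_
  rw [hadamard_apply, mul_pow, mul_comm (c ^ 2)]
  exact mul_le_mul_of_nonneg_left (sq_le_sq' (abs_le.mp (hB i j)).1 (abs_le.mp (hB i j)).2)
    (sq_nonneg _)

lemma diagonal_mul_mul_diagonal_sub_self {m R : Type*} [Fintype m] [DecidableEq m] [CommRing R]
    (x : m → R) (A : Matrix m m R) :
    diagonal x * A * diagonal x - A = A ⊙ Matrix.of fun i j => x i * x j - 1 := by
  ext i j
  simp only [Matrix.sub_apply, mul_diagonal, diagonal_mul, hadamard_apply, of_apply]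
  ring

lemma frobNorm_adjMatrix {n : ℕ} (G : SimpleGraph (Fin n)) [DecidableRel G.Adj] :
    frobNorm (G.adjMatrix ℝ) = Real.sqrt (∑ i, (G.degree i : ℝ)) := by
  have hsq : ∀ i j, (G.adjMatrix ℝ i j) ^ 2 = G.adjMatrix ℝ i j := fun i j => by
    by_cases h : G.Adj i j <;> simp [h]
  simp only [frobNorm, hsq]
  congr 1
  refine sum_congr rfl fun i _ => ?_
  simpa [mulVec, dotProduct] using G.adjMatrix_mulVec_const_apply (α := ℝ) (a := 1) (v := i)

lemma abs_mul_sub_one_le {x y a : ℝ} (hx : |x - 1| ≤ a) (hy : |y - 1| ≤ a) :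
    |x * y - 1| ≤ a * (2 + a) :=
  calc |x * y - 1| = |(x - 1) * (y - 1) + (x - 1) + (y - 1)| := by ring_nf
    _ ≤ |x - 1| * |y - 1| + |x - 1| + |y - 1| := by
      rw [← abs_mul]; exact abs_add_three _ _ _
    _ ≤ a * a + a + a := by gcongr; exact (abs_nonneg _).trans hx
    _ = a * (2 + a) := by ring

lemma abs_sqrt_div_sub_one_le {t m d M : ℝ} (ht : 0 ≤ t) (hm : 0 < m) (hmd : m ≤ d)
    (hdM : d ≤ M) :
    |Real.sqrt (t / d) - 1| ≤ max (Real.sqrt (t / m) - 1) (1 - Real.sqrt (t / M)) := by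
  have hupper : Real.sqrt (t / d) ≤ Real.sqrt (t / m) :=
    Real.sqrt_le_sqrt (div_le_div_of_nonneg_left ht hm hmd)
  have hlower : Real.sqrt (t / M) ≤ Real.sqrt (t / d) :=
    Real.sqrt_le_sqrt (div_le_div_of_nonneg_left ht (hm.trans_le hmd) hdM)
  rw [abs_le]
  constructor <;> linarith [le_max_left (Real.sqrt (t / m) - 1) (1 - Real.sqrt (t / M)),
    le_max_right (Real.sqrt (t / m) - 1) (1 - Real.sqrt (t / M))]

/-- with `E = A − R` and `F = L − (1/d̄) • R`, one has
`‖F‖_F ≤ (1/d̄)(‖E‖_F + α(2+α)√(n d̄))`. -/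
theorem laplacian_perturbation_bound
    {n : ℕ} (hn : 1 ≤ n) (G : SimpleGraph (Fin n)) [DecidableRel G.Adj]
    (hdeg : ∀ v, 0 < G.degree v) :
    letI hne : (Finset.univ : Finset (Fin n)).Nonempty :=
      Finset.univ_nonempty_iff.mpr (Fin.pos_iff_nonempty.mp (by omega))
    let A : Matrix (Fin n) (Fin n) ℝ := G.adjMatrix ℝ
    let dbar : ℝ := (∑ i, (G.degree i : ℝ)) / n
    let L : Matrix (Fin n) (Fin n) ℝ :=
      Matrix.diagonal (fun i => (Real.sqrt (G.degree i))⁻¹) * A *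
        Matrix.diagonal (fun i => (Real.sqrt (G.degree i))⁻¹)
    let dmin : ℕ := Finset.univ.inf' hne (fun v => G.degree v)
    let dmax : ℕ := Finset.univ.sup' hne (fun v => G.degree v)
    let α : ℝ := max (Real.sqrt (dbar / (dmin : ℝ)) - 1) (1 - Real.sqrt (dbar / (dmax : ℝ)))
    0 < dbar →
      ∀ R : Matrix (Fin n) (Fin n) ℝ,
        frobNorm (L - (1 / dbar) • R) ≤
          (1 / dbar) * (frobNorm (A - R) + α * (2 + α) * Real.sqrt (n * dbar)) := by
  intro A dbar L dmin dmax α hdbar R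
  set x : Fin n → ℝ := fun i => Real.sqrt (dbar / G.degree i)
  have hx : ∀ i, |x i - 1| ≤ α := fun i =>
    abs_sqrt_div_sub_one_le hdbar.le (by exact_mod_cast (lt_inf'_iff _).mpr fun v _ => hdeg v)
      (by exact_mod_cast inf'_le (fun v => G.degree v) (mem_univ i))
      (by exact_mod_cast le_sup' (fun v => G.degree v) (mem_univ i))
  have hα : 0 ≤ α := (abs_nonneg _).trans (hx ⟨0, hn⟩)
  have hdiag : diagonal x = Real.sqrt dbar • diagonal fun i => (Real.sqrt (G.degree i))⁻¹ := by
    rw [← diagonal_smul]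
    congr 1
    funext i
    simp [x, div_eq_mul_inv]
  have hL : L - (1 / dbar) • A = (1 / dbar) • (A ⊙ Matrix.of fun i j => x i * x j - 1) := by
    rw [← diagonal_mul_mul_diagonal_sub_self, hdiag]
    simp only [smul_mul_assoc, mul_smul_comm, smul_smul, Real.mul_self_sqrt hdbar.le]
    rw [smul_sub, smul_smul, one_div_mul_cancel hdbar.ne', one_smul]
  have hE : frobNorm (A ⊙ Matrix.of fun i j => x i * x j - 1) ≤ α * (2 + α) * frobNorm A :=
    frobNorm_hadamard_le A _ (by positivity) fun i j => abs_mul_sub_one_le (hx i) (hx j)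
  have hA : frobNorm A = Real.sqrt (n * dbar) := by
    rw [frobNorm_adjMatrix, mul_div_cancel₀ _ (by positivity)]
  calc frobNorm (L - (1 / dbar) • R)
      = frobNorm ((L - (1 / dbar) • A) + (1 / dbar) • (A - R)) := by rw [smul_sub]; abel_nf
    _ ≤ (1 / dbar) * (α * (2 + α) * frobNorm A) + (1 / dbar) * frobNorm (A - R) := by
      grw [frobNorm_add_le, hL, frobNorm_smul, frobNorm_smul, abs_of_pos (by positivity), hE]
    _ = (1 / dbar) * (frobNorm (A - R) + α * (2 + α) * Real.sqrt (n * dbar)) := by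
      rw [hA]; ring
end

section
/- Let G be a simple graph on Fin n with n ≥ 1, adjacency matrix A, mean degree d̄, and degree variance σ_d² = (1/n) * Σ i, ((d i : ℝ) − d̄)². Let P₁ = (1/n) • (𝟙 𝟙ᵀ), P⊥ = I − P₁, and Ã = P⊥ * A * P⊥. Then for every real n×n matrix M satisfying P⊥ * M * P⊥ = M, the Pythagorean decomposition ‖A − (d̄/n) • (𝟙 𝟙ᵀ) − M‖_F² = 2 * σ_d² + ‖Ã − M‖_F² holds. -/
open Matrix

/-! Write `Q = P⊥` and `g = Ã - M = Q (A - M) Q`, whose row and column sums vanish.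
Expanding `Q A Q` entrywise gives `A - (d̄/n) 𝟙𝟙ᵀ - M = (eᵢ + eⱼ)/n + g` with `e = d - d̄`.
The rank-two part `(eᵢ + eⱼ)/n` is Frobenius-orthogonal to `g` because `g` has zero row and
column sums, and its squared norm is `2 σ_d²` because `Σ e = 0`. -/

open Finset

lemma frobNorm_sq {n : ℕ} (M : Matrix (Fin n) (Fin n) ℝ) :
    frobNorm M ^ 2 = ∑ i, ∑ j, M i j ^ 2 :=
  Real.sq_sqrt <| sum_nonneg fun _ _ => sum_nonneg fun _ _ => sq_nonneg _

section CenteredMatrices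

variable {ι : Type*} [Fintype ι]

lemma sum_sum_sq_add_eq_of_row_col_sums_zero (u v : ι → ℝ) (g : Matrix ι ι ℝ)
    (hrow : ∀ i, ∑ j, g i j = 0) (hcol : ∀ j, ∑ i, g i j = 0) :
    ∑ i, ∑ j, (u i + v j + g i j) ^ 2 = ∑ i, ∑ j, (u i + v j) ^ 2 + ∑ i, ∑ j, g i j ^ 2 := by
  have hcross : ∑ i, ∑ j, (u i + v j) * g i j = 0 := by
    simp only [add_mul, sum_add_distrib, ← mul_sum, hrow, mul_zero, zero_add]
    rw [sum_comm]
    simp [← mul_sum, hcol]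
  calc ∑ i, ∑ j, (u i + v j + g i j) ^ 2
      = ∑ i, ∑ j, ((u i + v j) ^ 2 + g i j ^ 2) + 2 * ∑ i, ∑ j, (u i + v j) * g i j := by
        simp only [mul_sum, ← sum_add_distrib]
        congr! 2 with i _ j _
        ring
    _ = ∑ i, ∑ j, (u i + v j) ^ 2 + ∑ i, ∑ j, g i j ^ 2 := by
        simp [hcross, sum_add_distrib]

lemma sum_sum_add_sq_eq_of_sum_eq_zero (e : ι → ℝ) (he : ∑ i, e i = 0) :
    ∑ i, ∑ j, (e i + e j) ^ 2 = 2 * Fintype.card ι * ∑ i, e i ^ 2 := by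
  simp only [add_sq, sum_add_distrib, ← mul_sum, ← sum_mul, he, sum_const, card_univ,
    nsmul_eq_mul]
  ring

noncomputable def centeringMatrix (ι : Type*) [Fintype ι] [DecidableEq ι] : Matrix ι ι ℝ :=
  1 - ((Fintype.card ι : ℝ)⁻¹) • of fun _ _ => 1

variable [DecidableEq ι]

lemma centeringMatrix_mul_apply (N : Matrix ι ι ℝ) (i j : ι) :
    (centeringMatrix ι * N) i j = N i j - (∑ k, N k j) / Fintype.card ι := by
  rw [centeringMatrix, Matrix.sub_mul, Matrix.one_mul]
  simp [Matrix.mul_apply, ← mul_sum, div_eq_inv_mul]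

lemma mul_centeringMatrix_apply (N : Matrix ι ι ℝ) (i j : ι) :
    (N * centeringMatrix ι) i j = N i j - (∑ k, N i k) / Fintype.card ι := by
  rw [centeringMatrix, Matrix.mul_sub, Matrix.mul_one]
  simp [Matrix.mul_apply, ← sum_mul, div_eq_inv_mul, mul_comm]

variable [Nonempty ι]

lemma sum_centeringMatrix_mul_apply (N : Matrix ι ι ℝ) (j : ι) :
    ∑ i, (centeringMatrix ι * N) i j = 0 := by
  simp [centeringMatrix_mul_apply, sum_sub_distrib, mul_div_cancel₀]

lemma sum_mul_centeringMatrix_apply (N : Matrix ι ι ℝ) (i : ι) :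
    ∑ j, (N * centeringMatrix ι) i j = 0 := by
  simp [mul_centeringMatrix_apply, sum_sub_distrib, mul_div_cancel₀]

lemma centeringMatrix_mul_mul_centeringMatrix_apply (N : Matrix ι ι ℝ) (i j : ι) :
    (centeringMatrix ι * N * centeringMatrix ι) i j =
      N i j - (∑ k, N i k) / Fintype.card ι - (∑ k, N k j) / Fintype.card ι
        + (∑ k, ∑ l, N k l) / Fintype.card ι ^ 2 := by
  have hcard : (Fintype.card ι : ℝ) ≠ 0 := Nat.cast_ne_zero.mpr Fintype.card_ne_zero
  simp only [mul_centeringMatrix_apply, centeringMatrix_mul_apply, sum_sub_distrib,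
    ← sum_div]
  rw [sum_comm]
  field_simp
  ring

end CenteredMatrices

namespace SimpleGraph

variable {V α : Type*} [Fintype V] [NonAssocSemiring α] (G : SimpleGraph V) [DecidableRel G.Adj]

lemma sum_adjMatrix_apply_left (i : V) : ∑ j, G.adjMatrix α i j = G.degree i := by
  simp [adjMatrix_apply, sum_boole, degree, neighborFinset_eq_filter]

lemma sum_adjMatrix_apply_right (j : V) : ∑ i, G.adjMatrix α i j = G.degree j := by
  simp [adjMatrix_apply, sum_boole, degree, neighborFinset_eq_filter, G.adj_comm]

end SimpleGraph

/-- Pythagorean decomposition of the residual: for any matrix `M`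
supported on the orthogonal complement of `𝟙` (i.e. `P⊥ M P⊥ = M`),
`‖A − (d̄/n) 𝟙𝟙ᵀ − M‖_F² = 2 σ_d² + ‖Ã − M‖_F²` where `Ã = P⊥ A P⊥`. -/
theorem residual_pythagoras
    {n : ℕ} (hn : 1 ≤ n) (G : SimpleGraph (Fin n)) [DecidableRel G.Adj] :
    let A : Matrix (Fin n) (Fin n) ℝ := G.adjMatrix ℝ
    let dbar : ℝ := (∑ i, (G.degree i : ℝ)) / n
    let σd2 : ℝ := (1 / (n : ℝ)) * ∑ i, ((G.degree i : ℝ) - dbar) ^ 2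
    let J : Matrix (Fin n) (Fin n) ℝ := Matrix.of (fun _ _ => (1 : ℝ))
    let P₁ : Matrix (Fin n) (Fin n) ℝ := ((n : ℝ)⁻¹) • J
    let Pperp : Matrix (Fin n) (Fin n) ℝ := 1 - P₁
    let Atilde : Matrix (Fin n) (Fin n) ℝ := Pperp * A * Pperp
    ∀ M : Matrix (Fin n) (Fin n) ℝ, Pperp * M * Pperp = M →
      frobNorm (A - (dbar / n) • J - M) ^ 2 = 2 * σd2 + frobNorm (Atilde - M) ^ 2 := by
  intro A dbar σd2 J P₁ Pperp Atilde M hM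
  have hne : Nonempty (Fin n) := ⟨⟨0, hn⟩⟩
  have hn0 : (n : ℝ) ≠ 0 := by positivity
  have hP : Pperp = centeringMatrix (Fin n) := by simp [Pperp, P₁, J, centeringMatrix]
  rw [hP] at hM
  set e : Fin n → ℝ := fun i => (G.degree i : ℝ) - dbar
  set g := Atilde - M
  have hg : g = centeringMatrix (Fin n) * (A - M) * centeringMatrix (Fin n) := by
    rw [Matrix.mul_sub, Matrix.sub_mul, hM, ← hP]
  have hrow : ∀ i, ∑ j, g i j = 0 := fun i => by
    rw [hg]; exact sum_mul_centeringMatrix_apply _ i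
  have hcol : ∀ j, ∑ i, g i j = 0 := fun j => by
    rw [hg, Matrix.mul_assoc]; exact sum_centeringMatrix_mul_apply _ j
  have hentry : ∀ i j, (A - (dbar / n) • J - M) i j = e i / n + e j / n + g i j := by
    intro i j
    simp only [g, Atilde, hP, Matrix.sub_apply, centeringMatrix_mul_mul_centeringMatrix_apply, A,
      G.sum_adjMatrix_apply_left, G.sum_adjMatrix_apply_right, e, dbar, Fintype.card_fin, J,
      Matrix.smul_apply, of_apply, smul_eq_mul, mul_one]
    field_simp
    ring
  have he : ∑ i, e i / n = 0 := by
    simp only [e, dbar, ← sum_div, sum_sub_distrib]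
    simp [hn0]
  rw [frobNorm_sq, frobNorm_sq]
  simp only [hentry]
  rw [sum_sum_sq_add_eq_of_row_col_sums_zero _ _ _ hrow hcol, sum_sum_add_sq_eq_of_sum_eq_zero _ he]
  simp only [σd2, e, Fintype.card_fin, div_pow, ← sum_div]
  field_simp
end
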